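/- Let p be prime and a, b, m, n ∈ {1,...,p-1} with a ≠ b. If m+n+1 = p, then the sum over k from 0 to p-1 of (a+k)^m (b+k)^n is congruent to -1 mod p; if m+n = p, the sum is congruent to m(b-a) mod p. -/

import Mathlib

/-!
Substituting `y = a + k` turns the sum into `∑_{y ∈ 𝔽_p} y^m (y + c)^n` with `c = b - a`.
Expanding `(y + c)^n` binomially leaves the power sums `∑_y y^i` with `m ≤ i ≤ m + n`, which
vanish for `i < p - 1`, equal `-1` for `i = p - 1`, and vanish again for `i = p` because `y^p = y`
(this needs `p > 2`, which follows from `a ≠ b`). When `m + n + 1 = p` only the top term `j = n`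
survives; when `m + n = p` only `j = n - 1` does, contributing `-n c = m c`.
-/

open Finset

namespace FiniteField

variable {K : Type*} [Field K] [Fintype K]

theorem sum_pow_card_sub_one : ∑ x : K, x ^ (Fintype.card K - 1) = -1 := by
  classical
  have hq : 1 < Fintype.card K := Fintype.one_lt_card
  rw [← sum_erase_add _ _ (mem_univ 0), zero_pow (by omega), add_zero,
    sum_congr rfl fun x hx => pow_card_sub_one_eq_one x (ne_of_mem_erase hx), sum_const,
    card_erase_of_mem (mem_univ 0), card_univ, nsmul_one, Nat.cast_sub hq.le, cast_card_eq_zero,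
    Nat.cast_one, zero_sub]

theorem sum_pow_card (hK : 2 < Fintype.card K) : ∑ x : K, x ^ Fintype.card K = 0 := by
  simpa only [pow_card, pow_one] using sum_pow_lt_card_sub_one K 1 (by omega)

theorem sum_add_pow_mul_add_pow (a b : K) (m n : ℕ) :
    ∑ x : K, (a + x) ^ m * (b + x) ^ n =
      ∑ j ∈ range (n + 1), (n.choose j : K) * (b - a) ^ (n - j) * ∑ y : K, y ^ (m + j) := by
  calc ∑ x : K, (a + x) ^ m * (b + x) ^ n = ∑ y : K, y ^ m * (y + (b - a)) ^ n :=
        Fintype.sum_equiv (Equiv.addLeft a) _ _ fun x => by simp only [Equiv.coe_addLeft]; ring_nf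
    _ = ∑ y : K, ∑ j ∈ range (n + 1), (n.choose j : K) * (b - a) ^ (n - j) * y ^ (m + j) := by
        refine sum_congr rfl fun y _ => ?_
        rw [add_pow, mul_sum]
        exact sum_congr rfl fun j _ => by ring
    _ = _ := by
        rw [sum_comm]
        simp only [← mul_sum]

variable {m n : ℕ}

theorem sum_add_pow_mul_add_pow_of_add_add_one_eq_card (a b : K)
    (h : m + n + 1 = Fintype.card K) :
    ∑ x : K, (a + x) ^ m * (b + x) ^ n = -1 := by
  have hlow : ∀ j ∈ range n, ∑ y : K, y ^ (m + j) = 0 := fun j hj =>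
    sum_pow_lt_card_sub_one K _ (by simp only [mem_range] at hj; omega)
  rw [sum_add_pow_mul_add_pow, sum_range_succ, sum_eq_zero fun j hj => by rw [hlow j hj, mul_zero],
    show m + n = Fintype.card K - 1 by omega, sum_pow_card_sub_one]
  simp

theorem sum_add_pow_mul_add_pow_of_add_eq_card (a b : K) (hK : 2 < Fintype.card K) (hn : n ≠ 0)
    (h : m + n = Fintype.card K) :
    ∑ x : K, (a + x) ^ m * (b + x) ^ n = m * (b - a) := by
  obtain ⟨n, rfl⟩ := Nat.exists_eq_add_one_of_ne_zero hn
  have hlow : ∀ j ∈ range n, ∑ y : K, y ^ (m + j) = 0 := fun j hj =>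
    sum_pow_lt_card_sub_one K _ (by simp only [mem_range] at hj; omega)
  have hm : (m : K) = -(n + 1) := by
    rw [eq_neg_iff_add_eq_zero]
    exact_mod_cast h ▸ cast_card_eq_zero K
  rw [sum_add_pow_mul_add_pow, sum_range_succ, sum_range_succ,
    sum_eq_zero fun j hj => by rw [hlow j hj, mul_zero], h, sum_pow_card hK,
    show m + n = Fintype.card K - 1 by omega, sum_pow_card_sub_one, hm]
  simp only [Nat.choose_succ_self_right, Nat.cast_add, Nat.cast_one, Nat.add_sub_cancel_left]
  ring

end FiniteField

theorem ZMod.sum_range_natCast {M : Type*} [AddCommMonoid M] (p : ℕ) [NeZero p]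
    (f : ZMod p → M) : ∑ k ∈ range p, f k = ∑ x : ZMod p, f x :=
  sum_nbij' (↑) ZMod.val (fun _ _ => mem_univ _) (fun x _ => mem_range.mpr x.val_lt)
    (fun _ hk => ZMod.val_cast_of_lt (mem_range.mp hk)) (fun x _ => ZMod.natCast_zmod_val x)
    (fun _ _ => rfl)

theorem sum_product_special_cases_general (p a b m n : ℕ) (hp : p.Prime)
    (ha : 1 ≤ a ∧ a ≤ p - 1) (hb : 1 ≤ b ∧ b ≤ p - 1) (hab : a ≠ b)
    (hn : 1 ≤ n ∧ n ≤ p - 1) :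
    (m + n + 1 = p →
      (∑ k ∈ Finset.range p,
          ((a : ZMod p) + (k : ZMod p)) ^ m * ((b : ZMod p) + (k : ZMod p)) ^ n) = -1) ∧
    (m + n = p →
      (∑ k ∈ Finset.range p,
          ((a : ZMod p) + (k : ZMod p)) ^ m * ((b : ZMod p) + (k : ZMod p)) ^ n) =
        (m : ZMod p) * ((b : ZMod p) - (a : ZMod p))) := by
  have : Fact p.Prime := ⟨hp⟩
  have hp2 : 2 < Fintype.card (ZMod p) := by rw [ZMod.card]; omega
  rw [ZMod.sum_range_natCast p fun k => ((a : ZMod p) + k) ^ m * ((b : ZMod p) + k) ^ n]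
  exact ⟨fun h =>
      FiniteField.sum_add_pow_mul_add_pow_of_add_add_one_eq_card _ _ (by rwa [ZMod.card]),
    fun h => FiniteField.sum_add_pow_mul_add_pow_of_add_eq_card _ _ hp2 (by omega)
      (by rwa [ZMod.card])⟩

theorem sum_product_special_cases (p a b m n : ℕ) (hp : p.Prime)
    (ha : 1 ≤ a ∧ a ≤ p - 1) (hb : 1 ≤ b ∧ b ≤ p - 1) (hab : a ≠ b)
    (hm : 1 ≤ m ∧ m ≤ p - 1) (hn : 1 ≤ n ∧ n ≤ p - 1) :
    (m + n + 1 = p →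
      (∑ k ∈ Finset.range p,
          ((a : ZMod p) + (k : ZMod p)) ^ m * ((b : ZMod p) + (k : ZMod p)) ^ n) = -1) ∧
    (m + n = p →
      (∑ k ∈ Finset.range p,
          ((a : ZMod p) + (k : ZMod p)) ^ m * ((b : ZMod p) + (k : ZMod p)) ^ n) =
        (m : ZMod p) * ((b : ZMod p) - (a : ZMod p))) :=
  sum_product_special_cases_general p a b m n hp ha hb hab hn
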